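/- Let N be a finite player set and v : 2^N → ℝ supermodular with v(∅) = 0. For any ordering π of N, the marginal-contribution vector x_i = v(P_π(i) ∪ {i}) − v(P_π(i)) lies in the core: Σ_{i∈N} x_i = v(N) and Σ_{i∈S} x_i ≥ v(S) for every coalition S ⊆ N. -/

import Mathlib

/-!
Order the players by a rank function `σ`. Adding the players of a coalition `S` one at a time in
increasing rank, the newcomer `a` joins a set `s` contained in its predecessor set `P a`;
supermodularity applied to `insert a s` and `P a` says that `a` gains at least as much by joining `s`
as by joining `P a`, and the latter gain is `x a`. Summing gives `v S ≤ ∑ i ∈ S, x i`. When `S` is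
closed under predecessors the newcomer joins exactly `P a`, and the same sum telescopes to `v S`.
-/

open Finset

variable {α β : Type*} [Fintype α] [LinearOrder β]

/-- `P_π(i)` of the paper, for the ranking `σ` (here `σ = π.symm`). -/
def predecessors (σ : α → β) (i : α) : Finset α :=
  univ.filter fun j => σ j < σ i

lemma mem_predecessors {σ : α → β} {i j : α} : j ∈ predecessors σ i ↔ σ j < σ i := by
  simp [predecessors]

lemma subset_predecessors_of_le {σ : α → β} (hσ : Function.Injective σ) {a : α} {s : Finset α}
    (ha : a ∉ s) (hs : ∀ x ∈ s, σ x ≤ σ a) : s ⊆ predecessors σ a := fun x hx =>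
  mem_predecessors.2 <| (hs x hx).lt_of_ne fun h => ha (hσ h ▸ hx)

variable [DecidableEq α]

def marginalVector (v : Finset α → ℝ) (σ : α → β) (i : α) : ℝ :=
  v (insert i (predecessors σ i)) - v (predecessors σ i)

lemma sub_le_marginalVector {v : Finset α → ℝ}
    (hsup : ∀ S T : Finset α, v S + v T ≤ v (S ∪ T) + v (S ∩ T)) (σ : α → β) {a : α}
    {s : Finset α} (hs : s ⊆ predecessors σ a) :
    v (insert a s) - v s ≤ marginalVector v σ a := by
  have ha : a ∉ predecessors σ a := fun h => lt_irrefl _ (mem_predecessors.1 h)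
  have hunion : insert a s ∪ predecessors σ a = insert a (predecessors σ a) := by
    rw [insert_union, union_eq_right.2 hs]
  have hinter : insert a s ∩ predecessors σ a = s := by
    rw [insert_inter_of_notMem ha, inter_eq_left.2 hs]
  have hsup_a := hsup (insert a s) (predecessors σ a)
  rw [hunion, hinter] at hsup_a
  unfold marginalVector
  linarith

lemma le_sum_marginalVector {v : Finset α → ℝ} (hv0 : v ∅ = 0)
    (hsup : ∀ S T : Finset α, v S + v T ≤ v (S ∪ T) + v (S ∩ T)) {σ : α → β}
    (hσ : Function.Injective σ) (S : Finset α) :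
    v S ≤ ∑ i ∈ S, marginalVector v σ i := by
  induction S using Finset.induction_on_max_value σ with
  | empty => simp [hv0]
  | insert a s ha hs ih =>
    have hgain := sub_le_marginalVector hsup σ (subset_predecessors_of_le hσ ha hs)
    rw [sum_insert ha]
    linarith

lemma sum_marginalVector_of_predecessors_subset {v : Finset α → ℝ} (hv0 : v ∅ = 0)
    {σ : α → β} (hσ : Function.Injective σ) (S : Finset α)
    (hS : ∀ i ∈ S, predecessors σ i ⊆ S) :
    ∑ i ∈ S, marginalVector v σ i = v S := by
  induction S using Finset.induction_on_max_value σ with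
  | empty => simp [hv0]
  | insert a s ha hs ih =>
    have hpred : predecessors σ a = s := by
      refine (subset_predecessors_of_le hσ ha hs).antisymm' fun j hj => ?_
      have hja : σ j < σ a := mem_predecessors.1 hj
      exact (mem_insert.1 (hS a (mem_insert_self a s) hj)).resolve_left (by rintro rfl; simp at hja)
    have hs_closed : ∀ i ∈ s, predecessors σ i ⊆ s := fun i hi j hj => by
      have hji : σ j < σ i := mem_predecessors.1 hj
      refine (mem_insert.1 (hS i (mem_insert_of_mem hi) hj)).resolve_left ?_
      rintro rfl
      exact (hji.trans_le (hs i hi)).false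
    rw [sum_insert ha, ih hs_closed, marginalVector, hpred]
    ring

theorem marginal_vector_mem_core (n : ℕ) (v : Finset (Fin n) → ℝ) (hv0 : v ∅ = 0)
    (hsup : ∀ S T : Finset (Fin n), v S + v T ≤ v (S ∪ T) + v (S ∩ T))
    (π : Equiv.Perm (Fin n)) :
    (∑ i : Fin n,
      (v (insert i (Finset.univ.filter fun j => π.symm j < π.symm i)) -
       v (Finset.univ.filter fun j => π.symm j < π.symm i)) = v Finset.univ) ∧
    ∀ S : Finset (Fin n),
      v S ≤ ∑ i ∈ S,
        (v (insert i (Finset.univ.filter fun j => π.symm j < π.symm i)) -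
         v (Finset.univ.filter fun j => π.symm j < π.symm i)) :=
  ⟨sum_marginalVector_of_predecessors_subset hv0 π.symm.injective univ fun _ _ => subset_univ _,
    le_sum_marginalVector hv0 hsup π.symm.injective⟩
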